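/- Let p be an odd prime. Then the sum over k from 0 to p-1 of C_k² / 16^k is congruent to -3 modulo p, where C_k is the k-th Catalan number. -/

import Mathlib

/-!
Write `p = 2m + 1`. Since `m ≡ -1/2 (mod p)`, the identity `C(2k, k) = (-4)^k C(-1/2, k)` gives
`C(2k, k) ≡ (-4)^k C(m, k)` for `k < p`. Dividing by `k + 1`, with
`(k + 1) C(m + 1, k + 1) = (m + 1) C(m, k)` and `2 (m + 1) ≡ 1`, gives
`C_k ≡ 2 (-4)^k C(m + 1, k + 1)` for `k < p - 1`. So these terms of the sum are
`4 C(m + 1, k + 1)^2`, which add up to `4 (C(2m + 2, m + 1) - 1) ≡ -4` by Vandermonde and Lucas.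
The last term is `C_{p-1}^2 ≡ 1` by Fermat, as
`C_{p-1} = C(2p - 2, p - 1) - C(2p - 2, p) ≡ 0 - 1`.
-/

open Finset

theorem catalan_add_choose_succ_eq_centralBinom (n : ℕ) :
    catalan n + (2 * n).choose (n + 1) = n.centralBinom := by
  have h : (2 * n).choose (n + 1) * (n + 1) = n.centralBinom * n := by
    rw [Nat.choose_succ_right_eq, Nat.centralBinom_eq_two_mul_choose]
    congr 1
    omega
  apply Nat.eq_of_mul_eq_mul_left n.succ_pos
  rw [mul_add, succ_mul_catalan_eq_centralBinom]
  linarith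

theorem Nat.sum_range_choose_sq_of_le {n N : ℕ} (h : n + 1 ≤ N) :
    ∑ i ∈ range N, n.choose i ^ 2 = n.centralBinom := by
  obtain ⟨d, rfl⟩ := Nat.exists_eq_add_of_le h
  rw [sum_range_add, Nat.sum_range_choose_sq, ← Nat.centralBinom_eq_two_mul_choose,
    sum_eq_zero fun i _ ↦ by rw [Nat.choose_eq_zero_of_lt (by omega)]; rfl, add_zero]

theorem Nat.cast_choose_succ_mul {R : Type*} [CommRing R] (n k : ℕ) :
    (n.choose (k + 1) : R) * (k + 1) = n.choose k * (n - k) := by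
  rcases le_or_gt k n with h | h
  · have := congrArg (Nat.cast (R := R)) (Nat.choose_succ_right_eq n k)
    push_cast [Nat.cast_sub h] at this
    exact this
  · simp [Nat.choose_eq_zero_of_lt h, Nat.choose_eq_zero_of_lt (h.trans k.lt_succ_self)]

namespace ZMod

variable {p : ℕ} [Fact p.Prime]

theorem natCast_choose_add_mul {a b : ℕ} (c d : ℕ) (ha : a < p) (hb : b < p) :
    ((a + p * c).choose (b + p * d) : ZMod p) = a.choose b * c.choose d := by
  have h := Choose.choose_modEq_choose_mod_mul_choose_div (p := p) (n := a + p * c) (k := b + p * d)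
  have hp := (Fact.out : p.Prime).pos
  rw [Nat.add_mul_mod_self_left, Nat.add_mul_mod_self_left, Nat.mod_eq_of_lt ha,
    Nat.mod_eq_of_lt hb, Nat.add_mul_div_left _ _ hp, Nat.add_mul_div_left _ _ hp,
    Nat.div_eq_of_lt ha, Nat.div_eq_of_lt hb, zero_add, zero_add] at h
  exact_mod_cast (intCast_eq_intCast_iff _ _ _).mpr h

theorem natCast_add_one_ne_zero {k : ℕ} (hk : k + 1 < p) : (k + 1 : ZMod p) ≠ 0 := by
  rw [← Nat.cast_succ, Ne, natCast_eq_zero_iff]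
  exact Nat.not_dvd_of_pos_of_lt k.succ_pos hk

theorem natCast_catalan_sub_one : (catalan (p - 1) : ZMod p) = -1 := by
  have hp := (Fact.out : p.Prime).two_le
  have hcentral : ((p - 1).centralBinom : ZMod p) = 0 := by
    rw [← succ_mul_catalan_eq_centralBinom, Nat.sub_add_cancel (by omega)]
    simp
  have hchoose : ((2 * (p - 1)).choose (p - 1 + 1) : ZMod p) = 1 := by
    rw [show 2 * (p - 1) = (p - 2) + p * 1 by omega, show p - 1 + 1 = 0 + p * 1 by omega,
      natCast_choose_add_mul _ _ (by omega) (by omega)]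
    simp
  have h := congrArg (Nat.cast (R := ZMod p)) (catalan_add_choose_succ_eq_centralBinom (p - 1))
  push_cast at h
  rw [hcentral, hchoose] at h
  linear_combination h

theorem two_mul_add_one_eq_zero (m : ℕ) : (2 * m + 1 : ZMod (2 * m + 1)) = 0 := by
  exact_mod_cast natCast_self (2 * m + 1)

variable {m : ℕ} [Fact (2 * m + 1).Prime]

theorem natCast_centralBinom_eq_neg_four_pow_mul_choose {k : ℕ} (hk : k < 2 * m + 1) :
    (k.centralBinom : ZMod (2 * m + 1)) = (-4) ^ k * m.choose k := by
  induction k with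
  | zero => simp
  | succ k ih =>
    apply mul_left_cancel₀ (natCast_add_one_ne_zero hk)
    have hrec := congrArg (Nat.cast (R := ZMod (2 * m + 1))) (Nat.succ_mul_centralBinom_succ k)
    push_cast at hrec
    rw [hrec, ih (by omega)]
    linear_combination (-4) ^ k * 4 * Nat.cast_choose_succ_mul (R := ZMod (2 * m + 1)) m k
      + (-4) ^ k * 2 * m.choose k * two_mul_add_one_eq_zero m

theorem natCast_catalan_eq_two_mul_neg_four_pow_mul_choose {k : ℕ} (hk : k + 1 < 2 * m + 1) :
    (catalan k : ZMod (2 * m + 1)) = 2 * (-4) ^ k * (m + 1).choose (k + 1) := by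
  apply mul_left_cancel₀ (natCast_add_one_ne_zero hk)
  have hcat := congrArg (Nat.cast (R := ZMod (2 * m + 1))) (succ_mul_catalan_eq_centralBinom k)
  have hpascal := congrArg (Nat.cast (R := ZMod (2 * m + 1))) (Nat.add_one_mul_choose_eq m k)
  push_cast at hcat hpascal
  rw [hcat, natCast_centralBinom_eq_neg_four_pow_mul_choose (by omega)]
  linear_combination 2 * (-4) ^ k * hpascal - (-4) ^ k * m.choose k * two_mul_add_one_eq_zero m

theorem sixteen_ne_zero : (16 : ZMod (2 * m + 1)) ≠ 0 := by
  have h2 : (2 : ZMod (2 * m + 1)) * (m + 1) = 1 := by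
    linear_combination two_mul_add_one_eq_zero m
  rw [show (16 : ZMod (2 * m + 1)) = 2 ^ 4 by norm_num]
  exact pow_ne_zero 4 (left_ne_zero_of_mul_eq_one h2)

theorem natCast_catalan_sq_mul_inv_sixteen_pow {k : ℕ} (hk : k + 1 < 2 * m + 1) :
    (catalan k : ZMod (2 * m + 1)) ^ 2 * ((16 : ZMod (2 * m + 1)) ^ k)⁻¹ =
      4 * ((m + 1).choose (k + 1) : ZMod (2 * m + 1)) ^ 2 := by
  have h16 : ((-4) ^ k) ^ 2 = (16 : ZMod (2 * m + 1)) ^ k := by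
    rw [← pow_mul, pow_mul']
    norm_num
  rw [natCast_catalan_eq_two_mul_neg_four_pow_mul_choose hk, mul_pow, mul_pow, h16,
    mul_right_comm, mul_inv_cancel_right₀ (pow_ne_zero k sixteen_ne_zero)]
  ring

theorem sum_range_sq_choose_succ :
    ∑ k ∈ range (2 * m), ((m + 1).choose (k + 1) : ZMod (2 * m + 1)) ^ 2 = -1 := by
  have hm : 1 ≤ m := by
    have := (Fact.out : (2 * m + 1).Prime).two_le
    omega
  have hcentral : ((m + 1).centralBinom : ZMod (2 * m + 1)) = 0 := by
    rw [Nat.centralBinom_eq_two_mul_choose,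
      show 2 * (m + 1) = 1 + (2 * m + 1) * 1 by ring, ← add_zero (m + 1),
      ← mul_zero (2 * m + 1),
      natCast_choose_add_mul _ _ (by omega) (by omega), Nat.choose_eq_zero_of_lt (by omega)]
    simp
  have hsum := congrArg (Nat.cast (R := ZMod (2 * m + 1)))
    (Nat.sum_range_choose_sq_of_le (n := m + 1) (N := 2 * m + 1) (by omega))
  push_cast at hsum
  rw [sum_range_succ', hcentral] at hsum
  simp only [Nat.choose_zero_right, Nat.cast_one, one_pow] at hsum
  linear_combination hsum

end ZMod

theorem stmt_18 (p : ℕ) (hp : p.Prime) (hodd : Odd p) :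
    ∑ k ∈ Finset.range p, (catalan k : ZMod p) ^ 2 * ((16 : ZMod p) ^ k)⁻¹ =
    -3 := by
  obtain ⟨m, rfl⟩ := hodd
  have : Fact (2 * m + 1).Prime := ⟨hp⟩
  have hfermat : (16 : ZMod (2 * m + 1)) ^ (2 * m) = 1 :=
    ZMod.pow_card_sub_one_eq_one ZMod.sixteen_ne_zero
  have hlast : (catalan (2 * m) : ZMod (2 * m + 1)) = -1 := by
    simpa using ZMod.natCast_catalan_sub_one (p := 2 * m + 1)
  rw [sum_range_succ, hlast, hfermat,
    sum_congr rfl fun k hk ↦ ZMod.natCast_catalan_sq_mul_inv_sixteen_pow (by simp at hk; omega),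
    ← mul_sum, ZMod.sum_range_sq_choose_succ]
  norm_num
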